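/- arXiv:2409.20405 — 3 statements merged into one kernel-verified Lean document; each statement's English description precedes it below -/
import Mathlib

section
/- There exists δ > 0 such that, defining k_t := δ/(1+t)⁴ for t ≥ 0 and K_t := k_t + ∫_t^∞ s k_s ds, one has: (i) for all real numbers 0 ≤ t ≤ s', ∫_t^{s'} K_{s−t} K_{s'−s} ds ≤ K_{s'−t}; and (ii) ∫₀^∞ K_s ds ≤ 1. -/
/-!
On `t ≥ 0` the kernel has the closed form `K_t = δ (y⁴ + y²/2 - y³/3)` with `y = (1 + t)⁻¹`, hence
`δ/6 · y² ≤ K_t ≤ 3δ/2 · y²`: it is comparable to the inverse square `(1 + t)⁻²`.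
For `u + v = T` one has `(1 + u)⁻² (1 + v)⁻² ≤ 4 (1 + T)⁻² ((1 + u)⁻² + (1 + v)⁻²)`, and
`∫₀^∞ (1 + u)⁻² du = 1`, so `∫₀^T K_u K_{T-u} du ≤ 18 δ² (1 + T)⁻² ≤ δ/6 · (1 + T)⁻² ≤ K_T`
as soon as `δ ≤ 1/108`, while the total mass of `K` is at most `3δ/2`.
-/

open MeasureTheory

/-- `k_t := δ / (1+t)^4`. -/
noncomputable def kf (δ t : ℝ) : ℝ := δ / (1 + t) ^ 4

/-- `K_t := k_t + ∫_t^∞ s k_s ds`. -/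
noncomputable def Kf (δ t : ℝ) : ℝ := kf δ t + ∫ s in Set.Ioi t, s * kf δ s

open Set Filter Topology

lemma intervalIntegral_mono_of_nonneg {f g : ℝ → ℝ} {a b : ℝ} (hab : a ≤ b)
    (hf : ∀ x ∈ Ioc a b, 0 ≤ f x) (hg : IntervalIntegrable g volume a b)
    (hfg : ∀ x ∈ Ioc a b, f x ≤ g x) :
    ∫ x in a..b, f x ≤ ∫ x in a..b, g x := by
  rw [intervalIntegral.integral_of_le hab, intervalIntegral.integral_of_le hab]
  exact integral_mono_of_nonneg (ae_restrict_of_forall_mem measurableSet_Ioc hf) hg.1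
    (ae_restrict_of_forall_mem measurableSet_Ioc hfg)

lemma hasDerivAt_inv_one_add_pow (n : ℕ) {x : ℝ} (hx : 1 + x ≠ 0) :
    HasDerivAt (fun s : ℝ => (1 + s)⁻¹ ^ n) (-n * (1 + x)⁻¹ ^ (n + 1)) x := by
  refine ((((hasDerivAt_id x).const_add 1).fun_inv hx).fun_pow n).congr_deriv ?_
  rcases n with _ | n
  · simp
  · simp only [id, Nat.cast_add, Nat.cast_one, add_tsub_cancel_right, inv_pow]
    field_simp
    ring

lemma tendsto_inv_one_add_atTop : Tendsto (fun s : ℝ => (1 + s)⁻¹) atTop (𝓝 0) :=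
  tendsto_inv_atTop_zero.comp (tendsto_atTop_add_const_left _ 1 tendsto_id)

lemma integral_Ioi_mul_kf {δ t : ℝ} (hδ : 0 ≤ δ) (ht : 0 ≤ t) :
    ∫ s in Ioi t, s * kf δ s = δ * ((1 + t)⁻¹ ^ 2 / 2 - (1 + t)⁻¹ ^ 3 / 3) := by
  have hderiv : ∀ x ∈ Ici t, HasDerivAt
      (fun s => δ * ((1 + s)⁻¹ ^ 3 / 3 - (1 + s)⁻¹ ^ 2 / 2)) (x * kf δ x) x := by
    intro x hx
    have hx : 1 + x ≠ 0 := by linarith [hx.out]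
    refine ((((hasDerivAt_inv_one_add_pow 3 hx).div_const 3).fun_sub
      ((hasDerivAt_inv_one_add_pow 2 hx).div_const 2)).const_mul δ).congr_deriv ?_
    rw [kf]
    simp only [inv_pow]
    field_simp
    ring
  have hnonneg : ∀ x ∈ Ioi t, 0 ≤ x * kf δ x := fun x hx =>
    mul_nonneg (ht.trans hx.out.le) (by rw [kf]; positivity)
  have hlim : Tendsto (fun s => δ * ((1 + s)⁻¹ ^ 3 / 3 - (1 + s)⁻¹ ^ 2 / 2)) atTop (𝓝 0) := by
    simpa using (((tendsto_inv_one_add_atTop.pow 3).div_const 3).sub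
      ((tendsto_inv_one_add_atTop.pow 2).div_const 2)).const_mul δ
  rw [integral_Ioi_of_hasDerivAt_of_nonneg' hderiv hnonneg hlim]
  ring

lemma Kf_eq {δ t : ℝ} (hδ : 0 ≤ δ) (ht : 0 ≤ t) :
    Kf δ t = δ * ((1 + t)⁻¹ ^ 4 + (1 + t)⁻¹ ^ 2 / 2 - (1 + t)⁻¹ ^ 3 / 3) := by
  rw [Kf, integral_Ioi_mul_kf hδ ht, kf, div_eq_mul_inv, ← inv_pow]
  ring

lemma Kf_mem_Icc {δ t : ℝ} (hδ : 0 ≤ δ) (ht : 0 ≤ t) :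
    Kf δ t ∈ Icc (δ / 6 * (1 + t)⁻¹ ^ 2) (3 * δ / 2 * (1 + t)⁻¹ ^ 2) := by
  have hy0 : 0 ≤ (1 + t)⁻¹ := by positivity
  have hy1 : (1 + t)⁻¹ ≤ 1 := inv_le_one_of_one_le₀ (by linarith)
  rw [Kf_eq hδ ht]
  set y := (1 + t)⁻¹
  have hlow : y ^ 2 / 6 ≤ y ^ 4 + y ^ 2 / 2 - y ^ 3 / 3 := by nlinarith [sq_nonneg (y ^ 2 - y)]
  have hup : y ^ 4 + y ^ 2 / 2 - y ^ 3 / 3 ≤ 3 / 2 * y ^ 2 := by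
    nlinarith [mul_le_mul_of_nonneg_left hy1 (pow_nonneg hy0 3)]
  constructor <;> nlinarith [mul_le_mul_of_nonneg_left hlow hδ, mul_le_mul_of_nonneg_left hup hδ]

lemma Kf_nonneg {δ t : ℝ} (hδ : 0 ≤ δ) (ht : 0 ≤ t) : 0 ≤ Kf δ t :=
  le_trans (by positivity) (Kf_mem_Icc hδ ht).1

lemma hasDerivAt_neg_inv_one_add {x : ℝ} (hx : 1 + x ≠ 0) :
    HasDerivAt (fun s : ℝ => -(1 + s)⁻¹) ((1 + x)⁻¹ ^ 2) x := by
  simpa using (hasDerivAt_inv_one_add_pow 1 hx).fun_neg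

lemma integrableOn_Ioi_zero_inv_one_add_sq : IntegrableOn (fun u : ℝ => (1 + u)⁻¹ ^ 2) (Ioi 0) :=
  integrableOn_Ioi_deriv_of_nonneg' (g := fun s => -(1 + s)⁻¹) (l := 0)
    (fun x hx => hasDerivAt_neg_inv_one_add (by linarith [hx.out])) (fun _ _ => by positivity)
    (by simpa using tendsto_inv_one_add_atTop.neg)

lemma integral_Ioi_zero_inv_one_add_sq : ∫ u in Ioi (0 : ℝ), (1 + u)⁻¹ ^ 2 = 1 := by
  rw [integral_Ioi_of_hasDerivAt_of_nonneg' (g := fun s => -(1 + s)⁻¹) (l := 0)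
    (fun x hx => hasDerivAt_neg_inv_one_add (by linarith [hx.out])) (fun _ _ => by positivity)
    (by simpa using tendsto_inv_one_add_atTop.neg)]
  norm_num

lemma intervalIntegrable_inv_one_add_sq {T : ℝ} (hT : 0 ≤ T) :
    IntervalIntegrable (fun u : ℝ => (1 + u)⁻¹ ^ 2) volume 0 T :=
  (intervalIntegrable_iff_integrableOn_Ioc_of_le hT).mpr
    (integrableOn_Ioi_zero_inv_one_add_sq.mono_set Ioc_subset_Ioi_self)

lemma intervalIntegral_inv_one_add_sq_le_one {T : ℝ} (hT : 0 ≤ T) :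
    ∫ u in 0..T, (1 + u)⁻¹ ^ 2 ≤ 1 := by
  rw [intervalIntegral.integral_of_le hT]
  exact (setIntegral_mono_set integrableOn_Ioi_zero_inv_one_add_sq
    (Eventually.of_forall fun _ => by positivity) Ioc_subset_Ioi_self.eventuallyLE).trans_eq
    integral_Ioi_zero_inv_one_add_sq

lemma inv_sq_mul_inv_sq_le {a b : ℝ} (ha : 1 ≤ a) (hb : 1 ≤ b) :
    a⁻¹ ^ 2 * b⁻¹ ^ 2 ≤ 4 * (a + b - 1)⁻¹ ^ 2 * (a⁻¹ ^ 2 + b⁻¹ ^ 2) := by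
  have hc : 0 < a + b - 1 := by linarith
  simp only [inv_pow]
  field_simp
  nlinarith [sq_nonneg (a - b)]

lemma Kf_mul_Kf_le {δ u v : ℝ} (hδ : 0 ≤ δ) (hu : 0 ≤ u) (hv : 0 ≤ v) :
    Kf δ u * Kf δ v ≤ 9 * δ ^ 2 * (1 + (u + v))⁻¹ ^ 2 * ((1 + u)⁻¹ ^ 2 + (1 + v)⁻¹ ^ 2) := by
  calc Kf δ u * Kf δ v ≤ (3 * δ / 2 * (1 + u)⁻¹ ^ 2) * (3 * δ / 2 * (1 + v)⁻¹ ^ 2) :=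
        mul_le_mul (Kf_mem_Icc hδ hu).2 (Kf_mem_Icc hδ hv).2 (Kf_nonneg hδ hv) (by positivity)
    _ = 9 * δ ^ 2 / 4 * ((1 + u)⁻¹ ^ 2 * (1 + v)⁻¹ ^ 2) := by ring
    _ ≤ 9 * δ ^ 2 / 4 * (4 * ((1 + u) + (1 + v) - 1)⁻¹ ^ 2 * ((1 + u)⁻¹ ^ 2 + (1 + v)⁻¹ ^ 2)) :=
        mul_le_mul_of_nonneg_left
          (inv_sq_mul_inv_sq_le (by linarith : (1 : ℝ) ≤ 1 + u) (by linarith : (1 : ℝ) ≤ 1 + v))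
          (by positivity)
    _ = _ := by ring_nf

lemma intervalIntegral_Kf_mul_Kf_sub_le {δ T : ℝ} (hδ : 0 ≤ δ) (hδ' : δ ≤ 1 / 108)
    (hT : 0 ≤ T) : ∫ u in 0..T, Kf δ u * Kf δ (T - u) ≤ Kf δ T := by
  have hI := intervalIntegrable_inv_one_add_sq hT
  have hI' : IntervalIntegrable (fun u : ℝ => (1 + (T - u))⁻¹ ^ 2) volume 0 T := by
    simpa only [sub_zero, sub_self] using (hI.comp_sub_left T).symm
  have hsymm : ∫ u in 0..T, (1 + (T - u))⁻¹ ^ 2 = ∫ u in 0..T, (1 + u)⁻¹ ^ 2 := by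
    simpa only [sub_zero, sub_self] using
      intervalIntegral.integral_comp_sub_left (fun u : ℝ => (1 + u)⁻¹ ^ 2) (a := 0) (b := T) T
  set c := 9 * δ ^ 2 * (1 + T)⁻¹ ^ 2
  calc ∫ u in 0..T, Kf δ u * Kf δ (T - u)
      ≤ ∫ u in 0..T, c * ((1 + u)⁻¹ ^ 2 + (1 + (T - u))⁻¹ ^ 2) :=
        intervalIntegral_mono_of_nonneg hT
          (fun u hu => mul_nonneg (Kf_nonneg hδ hu.1.le) (Kf_nonneg hδ (by linarith [hu.2])))
          ((hI.add hI').const_mul c)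
          (fun u hu => by
            have h := Kf_mul_Kf_le hδ hu.1.le (show 0 ≤ T - u by linarith [hu.2])
            rwa [add_sub_cancel] at h)
    _ = c * (2 * ∫ u in 0..T, (1 + u)⁻¹ ^ 2) := by
        rw [intervalIntegral.integral_const_mul, intervalIntegral.integral_add hI hI', hsymm,
          two_mul]
    _ ≤ c * (2 * 1) := by
        gcongr
        exact intervalIntegral_inv_one_add_sq_le_one hT
    _ ≤ δ / 6 * (1 + T)⁻¹ ^ 2 := by
        have : 0 ≤ (1 + T)⁻¹ ^ 2 := by positivity
        nlinarith [mul_le_mul_of_nonneg_left hδ' (mul_nonneg hδ this)]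
    _ ≤ Kf δ T := (Kf_mem_Icc hδ hT).1

lemma setIntegral_Ioi_zero_Kf_le {δ : ℝ} (hδ : 0 ≤ δ) :
    ∫ s in Ioi (0 : ℝ), Kf δ s ≤ 3 * δ / 2 := by
  have hg := integrableOn_Ioi_zero_inv_one_add_sq.const_mul (3 * δ / 2)
  calc ∫ s in Ioi (0 : ℝ), Kf δ s ≤ ∫ s in Ioi (0 : ℝ), 3 * δ / 2 * (1 + s)⁻¹ ^ 2 :=
        integral_mono_of_nonneg
          (ae_restrict_of_forall_mem measurableSet_Ioi fun _ hs => Kf_nonneg hδ hs.out.le)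
          hg (ae_restrict_of_forall_mem measurableSet_Ioi fun _ hs => (Kf_mem_Icc hδ hs.out.le).2)
    _ = 3 * δ / 2 := by
        rw [MeasureTheory.integral_const_mul, integral_Ioi_zero_inv_one_add_sq, mul_one]

/-- there exists `δ > 0` such that the kernel `K` satisfies the
convolution inequality and has total mass at most one. -/
theorem stmt15 :
    ∃ δ : ℝ, 0 < δ ∧
      (∀ t s' : ℝ, 0 ≤ t → t ≤ s' →
        (∫ s in t..s', Kf δ (s - t) * Kf δ (s' - s)) ≤ Kf δ (s' - t)) ∧
      (∫ s in Set.Ioi (0 : ℝ), Kf δ s) ≤ 1 := by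
  refine ⟨1 / 108, by norm_num, fun t s' _ hts => ?_, ?_⟩
  · have hshift : ∫ s in t..s', Kf (1 / 108) (s - t) * Kf (1 / 108) (s' - s)
        = ∫ u in 0..s' - t, Kf (1 / 108) u * Kf (1 / 108) (s' - t - u) := by
      rw [← sub_self t, ← intervalIntegral.integral_comp_sub_right]
      simp only [sub_sub_sub_cancel_right]
    rw [hshift]
    exact intervalIntegral_Kf_mul_Kf_sub_le (by norm_num) le_rfl (by linarith)
  · linarith [setIntegral_Ioi_zero_Kf_le (δ := 1 / 108) (by norm_num)]
end

section
/- Fix r > 2 and c > 0. There exists a constant C = C(c,r) < ∞ such that for every pair of real random variables X₁, X₂ on a common probability space and every K₁, K₂ ∈ (0,∞) satisfying P[|X_i| ≥ tK_i] ≤ exp(−c (ln t)^{r/(r−2)}) for all t ∈ [1,∞) and i = 1, 2, one has P[|X₁X₂| ≥ t·CK₁K₂] ≤ exp(−(c/2^{r/(r−2)}) (ln t)^{r/(r−2)}) for every t ∈ [1,∞). -/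
open MeasureTheory

lemma aux_add_rpow (a b p : ℝ) (ha : 0 ≤ a) (hb : 0 ≤ b) (hp : 1 ≤ p) :
    a ^ p + b ^ p ≤ (a + b) ^ p := by
  lift a to NNReal using ha
  lift b to NNReal using hb
  exact_mod_cast NNReal.add_rpow_le_rpow_add a b hp

/-- product property of the `O_{Ψ,c}` notation. -/
theorem stmt18 (r : ℝ) (hr : 2 < r) (c : ℝ) (hc : 0 < c) :
    ∃ C : ℝ, ∀ (Ω : Type) [MeasurableSpace Ω] (μ : Measure Ω), IsProbabilityMeasure μ →
      ∀ (X₁ X₂ : Ω → ℝ) (K₁ K₂ : ℝ), 0 < K₁ → 0 < K₂ →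
      (∀ t : ℝ, 1 ≤ t →
        μ {ω | t * K₁ ≤ |X₁ ω|} ≤
          ENNReal.ofReal (Real.exp (-(c * Real.log t ^ (r / (r - 2)))))) →
      (∀ t : ℝ, 1 ≤ t →
        μ {ω | t * K₂ ≤ |X₂ ω|} ≤
          ENNReal.ofReal (Real.exp (-(c * Real.log t ^ (r / (r - 2)))))) →
      ∀ t : ℝ, 1 ≤ t →
        μ {ω | t * (C * K₁ * K₂) ≤ |X₁ ω * X₂ ω|} ≤
          ENNReal.ofReal
            (Real.exp (-(c / 2 ^ (r / (r - 2)) * Real.log t ^ (r / (r - 2))))) := by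
  set p := r / (r - 2) with hpdef
  have hr2 : (0:ℝ) < r - 2 := by linarith
  have hp1 : 1 ≤ p := (le_div_iff₀ hr2).mpr (by linarith)
  have hp0 : (0:ℝ) < p := lt_of_lt_of_le one_pos hp1
  set x := Real.log 2 * 2 ^ p / c with hxdef
  have hxpos : 0 ≤ x := by
    have : (0:ℝ) ≤ Real.log 2 := Real.log_nonneg (by norm_num)
    positivity
  set M := x ^ p⁻¹ with hMdef
  have hM0 : 0 ≤ M := Real.rpow_nonneg hxpos _
  have hMp : M ^ p = x := Real.rpow_inv_rpow hxpos hp0.ne'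
  refine ⟨Real.exp M, ?_⟩
  intro Ω _ μ hμ X₁ X₂ K₁ K₂ hK₁ hK₂ h1 h2 t ht
  set C := Real.exp M with hCdef
  have hC1 : 1 ≤ C := Real.one_le_exp hM0
  have htC : 1 ≤ t * C := le_trans (by norm_num) (mul_le_mul ht hC1 zero_le_one (by linarith))
  have htC0 : 0 ≤ t * C := by linarith
  set s := Real.sqrt (t * C) with hsdef
  have hs1 : 1 ≤ s := by
    rw [hsdef, show (1:ℝ) = Real.sqrt 1 by simp]
    exact Real.sqrt_le_sqrt htC
  have hsub : {ω | t * (C * K₁ * K₂) ≤ |X₁ ω * X₂ ω|} ⊆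
      {ω | s * K₁ ≤ |X₁ ω|} ∪ {ω | s * K₂ ≤ |X₂ ω|} := by
    intro ω hω
    by_contra hcon
    simp only [Set.mem_union, Set.mem_setOf_eq, not_or, not_le] at hcon
    obtain ⟨ha, hb⟩ := hcon
    have hmul : |X₁ ω| * |X₂ ω| < (s * K₁) * (s * K₂) :=
      mul_lt_mul'' ha hb (abs_nonneg _) (abs_nonneg _)
    have hss : s * s = t * C := Real.mul_self_sqrt htC0
    have habs : |X₁ ω * X₂ ω| = |X₁ ω| * |X₂ ω| := abs_mul _ _
    have hω' : t * (C * K₁ * K₂) ≤ |X₁ ω * X₂ ω| := hω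
    have heq : s * K₁ * (s * K₂) = t * (C * K₁ * K₂) := by rw [show t * (C * K₁ * K₂) = (t * C) * K₁ * K₂ by ring, ← hss]; ring
    linarith
  have hlt : 0 ≤ Real.log t := Real.log_nonneg ht
  have hls : Real.log s = (Real.log t + M) / 2 := by
    rw [hsdef, Real.log_sqrt htC0, Real.log_mul (by linarith) (by positivity),
      hCdef, Real.log_exp]
  have h2p : (0:ℝ) < 2 ^ p := Real.rpow_pos_of_pos (by norm_num) _
  have key1 : c / 2 ^ p * Real.log t ^ p + Real.log 2 ≤ c * Real.log s ^ p := by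
    rw [hls, Real.div_rpow (by linarith) (by norm_num)]
    have hge : Real.log t ^ p + x ≤ (Real.log t + M) ^ p := by
      have := aux_add_rpow (Real.log t) M p hlt hM0 hp1
      rwa [hMp] at this
    have heq : c / 2 ^ p * Real.log t ^ p + Real.log 2
        = c * ((Real.log t ^ p + x) / 2 ^ p) := by
      rw [hxdef]; field_simp
    rw [heq]
    gcongr
  have hexp : Real.exp (-(c * Real.log s ^ p)) + Real.exp (-(c * Real.log s ^ p))
      ≤ Real.exp (-(c / 2 ^ p * Real.log t ^ p)) := by
    have : Real.exp (-(c * Real.log s ^ p)) + Real.exp (-(c * Real.log s ^ p))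
        = Real.exp (Real.log 2 + -(c * Real.log s ^ p)) := by
      rw [Real.exp_add, Real.exp_log (by norm_num : (0:ℝ) < 2)]; ring
    rw [this]
    exact Real.exp_le_exp.mpr (by linarith)
  calc μ {ω | t * (C * K₁ * K₂) ≤ |X₁ ω * X₂ ω|}
      ≤ μ ({ω | s * K₁ ≤ |X₁ ω|} ∪ {ω | s * K₂ ≤ |X₂ ω|}) := measure_mono hsub
    _ ≤ μ {ω | s * K₁ ≤ |X₁ ω|} + μ {ω | s * K₂ ≤ |X₂ ω|} := measure_union_le _ _
    _ ≤ ENNReal.ofReal (Real.exp (-(c * Real.log s ^ p)))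
        + ENNReal.ofReal (Real.exp (-(c * Real.log s ^ p))) :=
        add_le_add (h1 s hs1) (h2 s hs1)
    _ = ENNReal.ofReal (Real.exp (-(c * Real.log s ^ p))
        + Real.exp (-(c * Real.log s ^ p))) :=
        (ENNReal.ofReal_add (Real.exp_nonneg _) (Real.exp_nonneg _)).symm
    _ ≤ ENNReal.ofReal (Real.exp (-(c / 2 ^ p * Real.log t ^ p))) :=
        ENNReal.ofReal_le_ofReal hexp
end

section
/- Fix r > 2 and c > 0. There exists a constant C = C(c,r) < ∞ such that for every N ≥ 1, every collection of real random variables X₁, …, X_N on a common probability space and every K ≥ 1 satisfying P[|X_i| ≥ tK] ≤ exp(−c (ln t)^{r/(r−2)}) for all t ∈ [1,∞) and every i, one has P[ max_{1≤i≤N} |X_i| ≥ t · e^{C (ln N)^{(r−2)/r}} K ] ≤ exp(−c (ln t)^{r/(r−2)}) for every t ∈ [1,∞). -/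
open MeasureTheory

lemma aux_superadd {x y p : ℝ} (hx : 0 ≤ x) (hy : 0 ≤ y) (hp : 1 ≤ p) :
    x ^ p + y ^ p ≤ (x + y) ^ p := by
  have h := NNReal.add_rpow_le_rpow_add ⟨x, hx⟩ ⟨y, hy⟩ hp
  have := NNReal.coe_le_coe.mpr h
  push_cast [NNReal.coe_rpow] at this
  exact this

/-- maximum property of the `O_{Ψ,c}` notation. -/
theorem stmt19 (r : ℝ) (hr : 2 < r) (c : ℝ) (hc : 0 < c) :
    ∃ C : ℝ, ∀ (Ω : Type) [MeasurableSpace Ω] (μ : Measure Ω), IsProbabilityMeasure μ →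
      ∀ (N : ℕ), 1 ≤ N → ∀ (X : Fin N → Ω → ℝ) (K : ℝ), 1 ≤ K →
      (∀ i, ∀ t : ℝ, 1 ≤ t →
        μ {ω | t * K ≤ |X i ω|} ≤
          ENNReal.ofReal (Real.exp (-(c * Real.log t ^ (r / (r - 2)))))) →
      ∀ t : ℝ, 1 ≤ t →
        μ {ω | t * (Real.exp (C * Real.log (N : ℝ) ^ ((r - 2) / r)) * K) ≤ ⨆ i, |X i ω|} ≤
          ENNReal.ofReal (Real.exp (-(c * Real.log t ^ (r / (r - 2))))) := by
  have hr2 : (0:ℝ) < r - 2 := by linarith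
  have hr0 : (0:ℝ) < r := by linarith
  set α : ℝ := r / (r - 2) with hαdef
  have hα : 1 ≤ α := by
    rw [hαdef, le_div_iff₀ hr2]; linarith
  set C : ℝ := (1 / c) ^ ((r - 2) / r) + 1 with hCdef
  have hCpos : 0 < C := by
    rw [hCdef]
    have : (0:ℝ) ≤ (1 / c) ^ ((r - 2) / r) := Real.rpow_nonneg (by positivity) _
    linarith
  refine ⟨C, ?_⟩
  intro Ω _ μ hμ N hN X K hK hX t ht
  set L : ℝ := Real.log (N : ℝ) ^ ((r - 2) / r) with hLdef
  have hlogN : 0 ≤ Real.log (N : ℝ) := Real.log_nonneg (by exact_mod_cast hN)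
  have hL : 0 ≤ L := Real.rpow_nonneg hlogN _
  have hCL : 0 ≤ C * L := mul_nonneg hCpos.le hL
  have hlogt : 0 ≤ Real.log t := Real.log_nonneg ht
  -- the shifted scale
  set s : ℝ := t * Real.exp (C * L) with hsdef
  have hs1 : 1 ≤ s := by
    have h1 : (1:ℝ) ≤ Real.exp (C * L) := Real.one_le_exp hCL
    calc (1:ℝ) = 1 * 1 := by ring
    _ ≤ t * Real.exp (C * L) := mul_le_mul ht h1 zero_le_one (by linarith)
  have hlogs : Real.log s = Real.log t + C * L := by
    rw [hsdef, Real.log_mul (by linarith) (Real.exp_ne_zero _), Real.log_exp]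
  -- union bound
  have hsub : {ω | t * (Real.exp (C * L) * K) ≤ ⨆ i, |X i ω|} ⊆
      ⋃ i, {ω | s * K ≤ |X i ω|} := by
    intro ω hω
    have hne : Nonempty (Fin N) := ⟨⟨0, hN⟩⟩
    obtain ⟨i, hi⟩ := Finite.exists_max (fun i => |X i ω|)
    have hsup : (⨆ j, |X j ω|) ≤ |X i ω| := ciSup_le hi
    refine Set.mem_iUnion.mpr ⟨i, ?_⟩
    have : t * (Real.exp (C * L) * K) = s * K := by rw [hsdef]; ring
    simp only [Set.mem_setOf_eq] at hω ⊢
    calc s * K = t * (Real.exp (C * L) * K) := this.symm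
    _ ≤ ⨆ j, |X j ω| := hω
    _ ≤ |X i ω| := hsup
  calc μ {ω | t * (Real.exp (C * L) * K) ≤ ⨆ i, |X i ω|}
      ≤ μ (⋃ i, {ω | s * K ≤ |X i ω|}) := measure_mono hsub
    _ ≤ ∑' i : Fin N, μ {ω | s * K ≤ |X i ω|} := measure_iUnion_le _
    _ ≤ ∑' _ : Fin N, ENNReal.ofReal (Real.exp (-(c * Real.log s ^ α))) :=
        ENNReal.tsum_le_tsum fun i => hX i s hs1
    _ = (N : ENNReal) * ENNReal.ofReal (Real.exp (-(c * Real.log s ^ α))) := by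
        simp [tsum_fintype, Finset.sum_const, nsmul_eq_mul]
    _ ≤ ENNReal.ofReal (Real.exp (-(c * Real.log t ^ α))) := by
        rw [← ENNReal.ofReal_natCast N, ← ENNReal.ofReal_mul (by positivity)]
        apply ENNReal.ofReal_le_ofReal
        have hNexp : (N : ℝ) = Real.exp (Real.log (N : ℝ)) := by
          rw [Real.exp_log]; exact_mod_cast Nat.lt_of_lt_of_le Nat.zero_lt_one hN
        rw [hNexp, ← Real.exp_add, Real.exp_le_exp]
        -- need : log N - c (log s)^α ≤ - c (log t)^α
        have key : Real.log (N : ℝ) + c * Real.log t ^ α ≤ c * Real.log s ^ α := by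
          have h1 : Real.log t ^ α + (C * L) ^ α ≤ Real.log s ^ α := by
            rw [hlogs]; exact aux_superadd hlogt hCL hα
          have hexp1 : (r - 2) / r * α = 1 := by
            rw [hαdef]; field_simp
          have hLα : L ^ α = Real.log (N : ℝ) := by
            rw [hLdef, ← Real.rpow_mul hlogN, hexp1, Real.rpow_one]
          have hCα : 1 / c ≤ C ^ α := by
            have h2 : (1 / c) ^ ((r - 2) / r) ≤ C := by
              rw [hCdef]; linarith
            calc 1 / c = ((1 / c) ^ ((r - 2) / r)) ^ α := by
                  rw [← Real.rpow_mul (by positivity), hexp1, Real.rpow_one]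
              _ ≤ C ^ α := Real.rpow_le_rpow (Real.rpow_nonneg (by positivity) _) h2
                  (by linarith)
          have h3 : Real.log (N : ℝ) ≤ c * (C * L) ^ α := by
            rw [Real.mul_rpow hCpos.le hL, hLα]
            calc Real.log (N : ℝ) = c * (1 / c) * Real.log (N : ℝ) := by
                  field_simp
              _ ≤ c * C ^ α * Real.log (N : ℝ) := by
                  apply mul_le_mul_of_nonneg_right _ hlogN
                  exact mul_le_mul_of_nonneg_left hCα hc.le
              _ = c * (C ^ α * Real.log (N : ℝ)) := by ring
          nlinarith [mul_le_mul_of_nonneg_left h1 hc.le]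
        linarith
end
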